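/- arXiv:1601.00748 — 2 statements merged into one kernel-verified Lean document; each statement's English description precedes it below -/
import Mathlib

section
/- Let R be a Dedekind domain and let f : A → B be a normal homomorphism of R-flat Hopf algebras over R. Set I := B f(A)⁺ B. Then I = B f(A)⁺ = f(A)⁺ B, and I is a normal Hopf ideal of B: ε_B(I) = 0, Δ_B(I) ⊆ I⊗B + B⊗I (as submodules of B⊗B), S_B(I) ⊆ I, and for every a ∈ I the elements ∑ a₂ ⊗ S(a₁)a₃ and ∑ a₂ ⊗ a₁S(a₃) lie in the image of I ⊗ B in B ⊗ B. -/
open TensorProduct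

/-- The image of `M ⊗ N` in `B ⊗[R] B`, for submodules `M, N` of `B`. -/
noncomputable def tmulSub {R B : Type*} [CommRing R] [AddCommGroup B] [Module R B]
    (M N : Submodule R B) : Submodule R (B ⊗[R] B) :=
  LinearMap.range (TensorProduct.map M.subtype N.subtype)

section HopfDefs

variable (R B : Type*) [CommRing R] [Ring B] [HopfAlgebra R B]

/-- The linear map `b ↦ ∑ b₁ a S(b₂)` (Sweedler notation). -/
noncomputable def lAd (a : B) : B →ₗ[R] B :=
  LinearMap.mul' R B ∘ₗ
    (TensorProduct.map LinearMap.id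
      (LinearMap.mulLeft R a ∘ₗ (HopfAlgebra.antipode R : B →ₗ[R] B))) ∘ₗ
      (Coalgebra.comul : B →ₗ[R] B ⊗[R] B)

/-- The linear map `b ↦ ∑ S(b₁) a b₂` (Sweedler notation). -/
noncomputable def rAd (a : B) : B →ₗ[R] B :=
  LinearMap.mul' R B ∘ₗ
    (TensorProduct.map
      (LinearMap.mulRight R a ∘ₗ (HopfAlgebra.antipode R : B →ₗ[R] B)) LinearMap.id) ∘ₗ
      (Coalgebra.comul : B →ₗ[R] B ⊗[R] B)

/-- An `R`-subalgebra `A` of the Hopf algebra `B` is a Hopf subalgebra if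
`Δ(A) ⊆ A ⊗ A` and `S(A) ⊆ A`. -/
def IsHopfSubalgebra (A : Subalgebra R B) : Prop :=
  (∀ a ∈ A, (Coalgebra.comul : B →ₗ[R] B ⊗[R] B) a ∈
      tmulSub (Subalgebra.toSubmodule A) (Subalgebra.toSubmodule A)) ∧
    ∀ a ∈ A, (HopfAlgebra.antipode R : B →ₗ[R] B) a ∈ A

/-- A subalgebra `A` of `B` is normal if `∑ b₁ a S(b₂) ∈ A` and `∑ S(b₁) a b₂ ∈ A`
for all `a ∈ A`, `b ∈ B`. -/
def IsNormalSubalgebra (A : Subalgebra R B) : Prop :=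
  ∀ a ∈ A, ∀ b : B, lAd R B a b ∈ A ∧ rAd R B a b ∈ A

end HopfDefs

/-- A submodule `N ⊆ M` is saturated if `M/N` is `R`-torsion-free, i.e. if
`r • b ∈ N` for some non-zero `r : R` implies `b ∈ N`. -/
def IsSaturatedIn {R M : Type*} [CommRing R] [AddCommGroup M] [Module R M]
    (N : Submodule R M) : Prop :=
  ∀ (r : R) (b : M), r ≠ 0 → r • b ∈ N → b ∈ N

open TensorProduct

section Sweedler

variable (R B : Type*) [CommRing R] [Ring B] [HopfAlgebra R B]

/-- The linear map `a ↦ ∑ a₂ ⊗ S(a₁)a₃` (Sweedler notation for the twofold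
iterated comultiplication). -/
noncomputable def sweedlerConjL : B →ₗ[R] B ⊗[R] B :=
  (TensorProduct.map LinearMap.id (LinearMap.mul' R B)) ∘ₗ
    (TensorProduct.assoc R B B B).toLinearMap ∘ₗ
      (TensorProduct.map
        ((TensorProduct.comm R B B).toLinearMap ∘ₗ
          TensorProduct.map (HopfAlgebra.antipode R : B →ₗ[R] B) LinearMap.id)
        LinearMap.id) ∘ₗ
        (TensorProduct.map (Coalgebra.comul : B →ₗ[R] B ⊗[R] B) LinearMap.id) ∘ₗ
          (Coalgebra.comul : B →ₗ[R] B ⊗[R] B)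

/-- The linear map `a ↦ ∑ a₂ ⊗ a₁S(a₃)` (Sweedler notation for the twofold
iterated comultiplication). -/
noncomputable def sweedlerConjR : B →ₗ[R] B ⊗[R] B :=
  (TensorProduct.map LinearMap.id (LinearMap.mul' R B)) ∘ₗ
    (TensorProduct.assoc R B B B).toLinearMap ∘ₗ
      (TensorProduct.map (TensorProduct.comm R B B).toLinearMap
        (HopfAlgebra.antipode R : B →ₗ[R] B)) ∘ₗ
        (TensorProduct.map (Coalgebra.comul : B →ₗ[R] B ⊗[R] B) LinearMap.id) ∘ₗ
          (Coalgebra.comul : B →ₗ[R] B ⊗[R] B)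

end Sweedler

section AugSpans

variable {R A B : Type*} [CommRing R] [Ring A] [Ring B] [HopfAlgebra R A] [HopfAlgebra R B]

/-- The two-sided ideal `B f(A)⁺ B` of `B`, as an `R`-submodule. -/
noncomputable def twoSidedAugSpan (f : A →ₐc[R] B) : Submodule R B :=
  Submodule.span R {x | ∃ (b : B) (a : A) (b' : B),
    (Coalgebra.counit : A →ₗ[R] R) a = 0 ∧ x = b * f a * b'}

/-- The left ideal `B f(A)⁺` of `B`, as an `R`-submodule. -/
noncomputable def leftAugSpan (f : A →ₐc[R] B) : Submodule R B :=
  Submodule.span R {x | ∃ (b : B) (a : A),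
    (Coalgebra.counit : A →ₗ[R] R) a = 0 ∧ x = b * f a}

/-- The right ideal `f(A)⁺ B` of `B`, as an `R`-submodule. -/
noncomputable def rightAugSpan (f : A →ₐc[R] B) : Submodule R B :=
  Submodule.span R {x | ∃ (a : A) (b : B),
    (Coalgebra.counit : A →ₗ[R] R) a = 0 ∧ x = f a * b}

end AugSpans

/-!
Normality of `f` is what makes the one-sided ideals two-sided: for `a ∈ A⁺` and `c ∈ B`,
`f(a) c = ∑ c₁ · rAd(f a)(c₂)` with `rAd(z)(b) = ∑ S(b₁) z b₂`, and by normality each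
`rAd(f a)(c₂)` is some `f(t)`, where `ε(t) = ε(a) ε(c₂) = 0`; hence `f(A)⁺ B ⊆ B f(A)⁺`, and
symmetrically. The Hopf ideal properties are then checked on generators.
The splitting `x ⊗ y = (x - ε(x) 1) ⊗ y + 1 ⊗ ε(x) y` on elements with left legs in `f(A)` gives
`Δ(f a) ∈ I ⊗ B + 1 ⊗ f(a)`, and puts `∑ f(a₂) ⊗ S(f(a₁)) f(a₃)` in `I ⊗ B` because its
`ε ⊗ id`-contraction is `ε(a) = 0`. Finally `∑ (xc)₂ ⊗ S((xc)₁)(xc)₃ =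
∑ (1 ⊗ S(c₁)) (∑ x₂ ⊗ S(x₁) x₃) (c₂ ⊗ c₃)`, and `I ⊗ B` is a two-sided ideal of `B ⊗ B`.
-/

open Coalgebra HopfAlgebra LinearMap WithConv

namespace Coalgebra

variable {R C B ι : Type*} {κ Λ : ι → Type*} [CommSemiring R] [AddCommMonoid C] [Module R C]
  [Coalgebra R C] {c : C}

theorem sum_counit_right_smul (r : Repr R c ι) :
    ∑ i ∈ r.index, counit (R := R) (r.right i) • r.left i = c := by
  simpa only [map_sum, TensorProduct.rid_tmul, one_smul] using
    congr(TensorProduct.rid R R C $(sum_tmul_counit_eq r))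

theorem sum_mul_mul_eq_of_coassoc [Semiring B] [Algebra R B] (r : Repr R c ι)
    (r₁ : ∀ i, Repr R (r.left i) (κ i)) (r₂ : ∀ i, Repr R (r.right i) (Λ i))
    (g h k : C →ₗ[R] B) :
    ∑ i ∈ r.index, ∑ j ∈ (r₁ i).index, g ((r₁ i).left j) * h ((r₁ i).right j) * k (r.right i) =
      ∑ i ∈ r.index, ∑ j ∈ (r₂ i).index,
        g (r.left i) * h ((r₂ i).left j) * k ((r₂ i).right j) := by
  simpa [map_sum, mul_assoc] using
    congr(mul' R B (map g (mul' R B ∘ₗ map h k) $(sum_tmul_tmul_eq r r₁ r₂)))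

end Coalgebra

section Hopf

variable {R A B : Type*} [CommSemiring R] [Semiring A] [Semiring B]
  [HopfAlgebra R A] [HopfAlgebra R B]

theorem BialgHom.map_antipode (f : A →ₐc[R] B) (a : A) :
    f (antipode R a) = antipode R (f a) := by
  have hleft : toConv (antipode R ∘ₗ f.toLinearMap) * toConv f.toLinearMap = 1 := by
    apply ofConv_injective
    calc (toConv (antipode R ∘ₗ f.toLinearMap) * toConv f.toLinearMap).ofConv
        = (toConv (antipode R) * toConv .id : WithConv (B →ₗ[R] B)).ofConv ∘ₗ
            f.toCoalgHom.toLinearMap := by rw [convMul_comp_coalgHom_distrib]; rfl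
      _ = _ := by rw [antipode_mul_id, convOne_comp_coalgHom]
  have hright : toConv f.toLinearMap * toConv (f.toLinearMap ∘ₗ antipode R) = 1 := by
    apply ofConv_injective
    calc (toConv f.toLinearMap * toConv (f.toLinearMap ∘ₗ antipode R)).ofConv
        = (AlgHomClass.toAlgHom f).toLinearMap ∘ₗ
            (toConv .id * toConv (antipode R) : WithConv (A →ₗ[R] A)).ofConv := by
          rw [algHom_comp_convMul_distrib]; rfl
      _ = _ := by rw [id_mul_antipode, algHom_comp_convOne]
  exact congr($(left_inv_eq_right_inv hleft hright).ofConv a).symm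

end Hopf

section Adjoint

variable {R B ι : Type*} [CommRing R] [Ring B] [HopfAlgebra R B] {c : B}

theorem rAd_apply_repr (z : B) (r : Repr R c ι) :
    rAd R B z c = ∑ i ∈ r.index, antipode R (r.left i) * z * r.right i := by
  simp [rAd, ← r.eq, map_sum]

theorem lAd_apply_repr (z : B) (r : Repr R c ι) :
    lAd R B z c = ∑ i ∈ r.index, r.left i * z * antipode R (r.right i) := by
  simp [lAd, ← r.eq, map_sum, mul_assoc]

theorem counit_rAd (z b : B) : counit (R := R) (rAd R B z b) = counit z * counit b := by
  let r := ℛ R b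
  calc counit (R := R) (rAd R B z b)
      = counit z * counit (∑ i ∈ r.index, antipode R (r.left i) * r.right i) := by
        simp only [rAd_apply_repr z r, map_sum, Bialgebra.counit_mul, Finset.mul_sum]
        exact Finset.sum_congr rfl fun _ _ => by ring
    _ = counit z * counit b := by simp [sum_antipode_mul_eq_algebraMap_counit]

theorem counit_lAd (z b : B) : counit (R := R) (lAd R B z b) = counit z * counit b := by
  let r := ℛ R b
  calc counit (R := R) (lAd R B z b)
      = counit z * counit (∑ i ∈ r.index, r.left i * antipode R (r.right i)) := by
        simp only [lAd_apply_repr z r, map_sum, Bialgebra.counit_mul, Finset.mul_sum]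
        exact Finset.sum_congr rfl fun _ _ => by ring
    _ = counit z * counit b := by simp [sum_mul_antipode_eq_algebraMap_counit]

theorem sum_mul_rAd (z : B) (r : Repr R c ι) :
    ∑ i ∈ r.index, r.left i * rAd R B z (r.right i) = z * c := by
  let r₁ i := ℛ R (r.left i)
  let r₂ i := ℛ R (r.right i)
  calc ∑ i ∈ r.index, r.left i * rAd R B z (r.right i)
      = ∑ i ∈ r.index, ∑ j ∈ (r₂ i).index,
          r.left i * (antipode R ((r₂ i).left j) * z) * (r₂ i).right j := by
        simp only [rAd_apply_repr z (r₂ _), Finset.mul_sum, mul_assoc]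
    _ = ∑ i ∈ r.index, ∑ j ∈ (r₁ i).index,
          (r₁ i).left j * (antipode R ((r₁ i).right j) * z) * r.right i :=
        (sum_mul_mul_eq_of_coassoc r r₁ r₂ .id (mulRight R z ∘ₗ antipode R) .id).symm
    _ = ∑ i ∈ r.index, (∑ j ∈ (r₁ i).index, (r₁ i).left j * antipode R ((r₁ i).right j)) *
          z * r.right i := by
        simp only [Finset.sum_mul, mul_assoc]
    _ = z * c := by
        simp only [sum_mul_antipode_eq_algebraMap_counit, ← Algebra.smul_def, smul_mul_assoc,
          ← mul_smul_comm, ← Finset.mul_sum, sum_counit_smul]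

theorem sum_lAd_mul (z : B) (r : Repr R c ι) :
    ∑ i ∈ r.index, lAd R B z (r.left i) * r.right i = c * z := by
  let r₁ i := ℛ R (r.left i)
  let r₂ i := ℛ R (r.right i)
  calc ∑ i ∈ r.index, lAd R B z (r.left i) * r.right i
      = ∑ i ∈ r.index, ∑ j ∈ (r₁ i).index,
          (r₁ i).left j * (z * antipode R ((r₁ i).right j)) * r.right i := by
        simp only [lAd_apply_repr z (r₁ _), Finset.sum_mul, mul_assoc]
    _ = ∑ i ∈ r.index, ∑ j ∈ (r₂ i).index,
          r.left i * (z * antipode R ((r₂ i).left j)) * (r₂ i).right j :=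
        sum_mul_mul_eq_of_coassoc r r₁ r₂ .id (mulLeft R z ∘ₗ antipode R) .id
    _ = ∑ i ∈ r.index, r.left i * z *
          ∑ j ∈ (r₂ i).index, antipode R ((r₂ i).left j) * (r₂ i).right j := by
        simp only [Finset.mul_sum, mul_assoc]
    _ = c * z := by
        simp only [sum_antipode_mul_eq_algebraMap_counit, ← Algebra.commutes, ← mul_assoc,
          ← Algebra.smul_def, ← Finset.sum_mul, sum_counit_right_smul]

end Adjoint

section AugSpans

variable {R A B : Type*} [CommRing R] [Ring A] [Ring B] [HopfAlgebra R A] [HopfAlgebra R B]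
  (f : A →ₐc[R] B)

theorem mul_mul_mem_twoSidedAugSpan (x y z : B) (hy : y ∈ twoSidedAugSpan f) :
    x * y * z ∈ twoSidedAugSpan f := by
  induction hy using Submodule.span_induction with
  | mem y hy =>
    obtain ⟨b, a, b', ha, rfl⟩ := hy
    exact Submodule.subset_span ⟨x * b, a, b' * z, ha, by simp only [mul_assoc]⟩
  | zero => simp
  | add y y' _ _ hy hy' => simpa [mul_add, add_mul] using add_mem hy hy'
  | smul r y _ hy => simpa using Submodule.smul_mem _ r hy

theorem mul_mem_leftAugSpan {y : B} (hy : y ∈ leftAugSpan f) (x : B) :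
    x * y ∈ leftAugSpan f := by
  induction hy using Submodule.span_induction with
  | mem y hy =>
    obtain ⟨b, a, ha, rfl⟩ := hy
    exact Submodule.subset_span ⟨x * b, a, ha, (mul_assoc _ _ _).symm⟩
  | zero => simp
  | add y y' _ _ hy hy' => simpa [mul_add] using add_mem hy hy'
  | smul r y _ hy => simpa using Submodule.smul_mem _ r hy

theorem mul_mem_rightAugSpan {y : B} (hy : y ∈ rightAugSpan f) (x : B) :
    y * x ∈ rightAugSpan f := by
  induction hy using Submodule.span_induction with
  | mem y hy =>
    obtain ⟨a, b, ha, rfl⟩ := hy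
    exact Submodule.subset_span ⟨a, b * x, ha, mul_assoc _ _ _⟩
  | zero => simp
  | add y y' _ _ hy hy' => simpa [add_mul] using add_mem hy hy'
  | smul r y _ hy => simpa using Submodule.smul_mem _ r hy

theorem leftAugSpan_le_twoSidedAugSpan : leftAugSpan f ≤ twoSidedAugSpan f :=
  Submodule.span_le.2 fun _ ⟨b, a, ha, hx⟩ => Submodule.subset_span ⟨b, a, 1, ha, by rw [hx, mul_one]⟩

theorem rightAugSpan_le_twoSidedAugSpan : rightAugSpan f ≤ twoSidedAugSpan f :=
  Submodule.span_le.2 fun _ ⟨a, b, ha, hx⟩ => Submodule.subset_span ⟨1, a, b, ha, by rw [hx, one_mul]⟩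

theorem map_mul_mem_leftAugSpan {a : A} (ha : counit (R := R) a = 0)
    (hnormal : ∀ b, rAd R B (f a) b ∈ Set.range f) (c : B) : f a * c ∈ leftAugSpan f := by
  rw [← sum_mul_rAd (f a) (ℛ R c)]
  refine Submodule.sum_mem _ fun i _ => ?_
  obtain ⟨t, ht⟩ := hnormal ((ℛ R c).right i)
  have hεt : counit (R := R) t = 0 := by
    rw [← CoalgHomClass.counit_comp_apply f, ht, counit_rAd, CoalgHomClass.counit_comp_apply, ha,
      zero_mul]
  exact Submodule.subset_span ⟨_, t, hεt, by rw [ht]⟩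

theorem mul_map_mem_rightAugSpan {a : A} (ha : counit (R := R) a = 0)
    (hnormal : ∀ b, lAd R B (f a) b ∈ Set.range f) (c : B) : c * f a ∈ rightAugSpan f := by
  rw [← sum_lAd_mul (f a) (ℛ R c)]
  refine Submodule.sum_mem _ fun i _ => ?_
  obtain ⟨t, ht⟩ := hnormal ((ℛ R c).left i)
  have hεt : counit (R := R) t = 0 := by
    rw [← CoalgHomClass.counit_comp_apply f, ht, counit_lAd, CoalgHomClass.counit_comp_apply, ha,
      zero_mul]
  exact Submodule.subset_span ⟨t, _, hεt, by rw [ht]⟩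

theorem twoSidedAugSpan_eq_leftAugSpan (hnormal : ∀ a b, rAd R B (f a) b ∈ Set.range f) :
    twoSidedAugSpan f = leftAugSpan f := by
  refine le_antisymm (Submodule.span_le.2 ?_) (leftAugSpan_le_twoSidedAugSpan f)
  rintro _ ⟨b, a, b', ha, rfl⟩
  rw [mul_assoc]
  exact mul_mem_leftAugSpan f (map_mul_mem_leftAugSpan f ha (hnormal a) b') b

theorem twoSidedAugSpan_eq_rightAugSpan (hnormal : ∀ a b, lAd R B (f a) b ∈ Set.range f) :
    twoSidedAugSpan f = rightAugSpan f := by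
  refine le_antisymm (Submodule.span_le.2 ?_) (rightAugSpan_le_twoSidedAugSpan f)
  rintro _ ⟨b, a, b', ha, rfl⟩
  exact mul_mem_rightAugSpan f (mul_map_mem_rightAugSpan f ha (hnormal a) b) b'

end AugSpans

section TmulSub

variable {R B : Type*} [CommRing R] [Ring B] [Algebra R B]

theorem tmul_mem_tmulSub {M N : Submodule R B} {m n : B} (hm : m ∈ M) (hn : n ∈ N) :
    m ⊗ₜ[R] n ∈ tmulSub M N :=
  ⟨⟨m, hm⟩ ⊗ₜ ⟨n, hn⟩, rfl⟩

theorem mul_mul_mem_tmulSub {M N : Submodule R B} (hM : ∀ x y z, y ∈ M → x * y * z ∈ M)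
    (hN : ∀ x y z, y ∈ N → x * y * z ∈ N) (u t v : B ⊗[R] B) (ht : t ∈ tmulSub M N) :
    u * t * v ∈ tmulSub M N := by
  obtain ⟨s, rfl⟩ := ht
  induction s using TensorProduct.induction_on with
  | zero => simp
  | add s s' hs hs' => simpa [mul_add, add_mul] using add_mem hs hs'
  | tmul m n =>
    induction u using TensorProduct.induction_on with
    | zero => simp
    | add u u' hu hu' => simpa [add_mul] using add_mem hu hu'
    | tmul u₁ u₂ =>
      induction v using TensorProduct.induction_on with
      | zero => simp
      | add v v' hv hv' => simpa [mul_add] using add_mem hv hv'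
      | tmul v₁ v₂ =>
        simpa using tmul_mem_tmulSub (hM u₁ m v₁ m.2) (hN u₂ n v₂ n.2)

end TmulSub

section HopfIdeal

variable {R A B : Type*} [CommRing R] [Ring A] [Ring B] [HopfAlgebra R A] [HopfAlgebra R B]
  (f : A →ₐc[R] B)

theorem map_mem_twoSidedAugSpan {a : A} (ha : counit (R := R) a = 0) :
    f a ∈ twoSidedAugSpan f :=
  Submodule.subset_span ⟨1, a, 1, ha, by rw [one_mul, mul_one]⟩

theorem counit_eq_zero_of_mem_twoSidedAugSpan {x : B} (hx : x ∈ twoSidedAugSpan f) :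
    counit (R := R) x = 0 := by
  have hle : twoSidedAugSpan f ≤ ker (counit (R := R) (A := B)) := by
    refine Submodule.span_le.2 ?_
    rintro _ ⟨b, a, b', ha, rfl⟩
    simp [Bialgebra.counit_mul, ha]
  exact hle hx

theorem antipode_mem_twoSidedAugSpan {x : B} (hx : x ∈ twoSidedAugSpan f) :
    antipode R x ∈ twoSidedAugSpan f := by
  have hle : twoSidedAugSpan f ≤ (twoSidedAugSpan f).comap (antipode R) := by
    refine Submodule.span_le.2 ?_
    rintro _ ⟨b, a, b', ha, rfl⟩
    refine Submodule.subset_span ⟨antipode R b', antipode R a, antipode R b, by simpa using ha, ?_⟩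
    rw [antipode_mul_antidistrib, antipode_mul_antidistrib, ← BialgHom.map_antipode, mul_assoc]
  exact hle hx

theorem map_sub_one_tmul_mem_tmulSub (s : A ⊗[R] B) :
    map (f : A →ₗ[R] B) .id s - 1 ⊗ₜ TensorProduct.lid R B (rTensor B counit s) ∈
      tmulSub (twoSidedAugSpan f) ⊤ := by
  induction s using TensorProduct.induction_on with
  | zero => simp
  | add s s' hs hs' => simpa [sub_add_sub_comm, tmul_add] using add_mem hs hs'
  | tmul a b =>
    have hmem : f a - counit (R := R) a • 1 ∈ twoSidedAugSpan f := by
      simpa using map_mem_twoSidedAugSpan f (a := a - counit (R := R) a • 1) (by simp)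
    simpa [sub_tmul, smul_tmul] using tmul_mem_tmulSub hmem (Submodule.mem_top (x := b))

theorem comul_map_sub_one_tmul_mem_tmulSub (a : A) :
    comul (f a) - 1 ⊗ₜ f a ∈ tmulSub (twoSidedAugSpan f) ⊤ := by
  have hΔ : map (f : A →ₗ[R] B) .id (lTensor A (f : A →ₗ[R] B) (comul a)) = comul (f a) := by
    rw [map_lTensor, id_comp]
    exact CoalgHomClass.map_comp_comul_apply f a
  have hε : TensorProduct.lid R B (rTensor B counit (lTensor A (f : A →ₗ[R] B) (comul a))) =
      f a := by
    rw [← comp_apply (rTensor B _), rTensor_comp_lTensor, ← lTensor_comp_rTensor, comp_apply,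
      rTensor_counit_comul]
    simp
  simpa only [hΔ, hε] using map_sub_one_tmul_mem_tmulSub f (lTensor A (f : A →ₗ[R] B) (comul a))

theorem comul_mem_of_mem_twoSidedAugSpan {x : B} (hx : x ∈ twoSidedAugSpan f) :
    comul (R := R) x ∈
      tmulSub (twoSidedAugSpan f) ⊤ ⊔ tmulSub ⊤ (twoSidedAugSpan f) := by
  have hI := mul_mul_mem_twoSidedAugSpan f
  have htop : ∀ x y z, y ∈ (⊤ : Submodule R B) → x * y * z ∈ (⊤ : Submodule R B) :=
    fun _ _ _ _ => Submodule.mem_top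
  have hle : twoSidedAugSpan f ≤ (tmulSub (twoSidedAugSpan f) ⊤ ⊔
      tmulSub ⊤ (twoSidedAugSpan f)).comap (comul (R := R)) := by
    refine Submodule.span_le.2 ?_
    rintro _ ⟨b, a, b', ha, rfl⟩
    have hfa : (1 : B) ⊗ₜ[R] f a ∈ tmulSub ⊤ (twoSidedAugSpan f) :=
      tmul_mem_tmulSub Submodule.mem_top (map_mem_twoSidedAugSpan f ha)
    rw [SetLike.mem_coe, Submodule.mem_comap, Bialgebra.comul_mul, Bialgebra.comul_mul,
      ← sub_add_cancel (comul (f a)) (1 ⊗ₜ f a), mul_add, add_mul]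
    exact add_mem
      (Submodule.mem_sup_left (mul_mul_mem_tmulSub hI htop _ _ _
        (comul_map_sub_one_tmul_mem_tmulSub f a)))
      (Submodule.mem_sup_right (mul_mul_mem_tmulSub htop hI _ _ _ hfa))
  exact hle hx

end HopfIdeal

section Sweedler

variable {R B : Type*} [CommRing R] [Ring B] [HopfAlgebra R B]

theorem sweedlerConjL_mul_mem {J : Submodule R (B ⊗[R] B)}
    (hJ : ∀ u t v, t ∈ J → u * t * v ∈ J) {x : B} (hx : sweedlerConjL R B x ∈ J) (c : B) :
    sweedlerConjL R B (x * c) ∈ J := by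
  -- `T ((u ⊗ v) ⊗ w) = v ⊗ S(u) w`, so that `sweedlerConjL = T ∘ (Δ ⊗ id) ∘ Δ`.
  let T : (B ⊗[R] B) ⊗[R] B →ₗ[R] B ⊗[R] B :=
    map .id (mul' R B) ∘ₗ (TensorProduct.assoc R B B B).toLinearMap ∘ₗ
      map ((TensorProduct.comm R B B).toLinearMap ∘ₗ map (antipode R) .id) .id
  have hT : ∀ U (u v w : B), T (U * (u ⊗ₜ v) ⊗ₜ w) = (1 ⊗ₜ antipode R u) * T U * (v ⊗ₜ w) := by
    intro U u v w
    induction U using TensorProduct.induction_on with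
    | zero => simp
    | add U U' hU hU' => simp only [add_mul, mul_add, map_add, hU, hU']
    | tmul p z =>
      induction p using TensorProduct.induction_on with
      | zero => simp
      | add p p' hp hp' => simp only [add_tmul, add_mul, mul_add, map_add, hp, hp']
      | tmul x y => simp [T, antipode_mul_antidistrib, mul_assoc]
  have hmul : ∀ U V, T U ∈ J → T (U * V) ∈ J := by
    intro U V hU
    induction V using TensorProduct.induction_on with
    | zero => simp
    | add V V' hV hV' => simpa only [mul_add, map_add] using add_mem hV hV'
    | tmul p w =>
      induction p using TensorProduct.induction_on with
      | zero => simp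
      | add p p' hp hp' => simpa only [add_tmul, mul_add, map_add] using add_mem hp hp'
      | tmul u v => rw [hT]; exact hJ _ _ _ hU
  have hΔ : sweedlerConjL R B (x * c) =
      T (map comul .id (comul x) * map comul .id (comul c)) := by
    change T (map comul .id (comul (x * c))) = _
    rw [Bialgebra.comul_mul]
    exact congrArg T
      (map_mul (Algebra.TensorProduct.map (Bialgebra.comulAlgHom R B) (AlgHom.id R B)) _ _)
  exact hΔ ▸ hmul _ _ hx

theorem sweedlerConjR_mul_mem {J : Submodule R (B ⊗[R] B)}
    (hJ : ∀ u t v, t ∈ J → u * t * v ∈ J) {x : B} (hx : sweedlerConjR R B x ∈ J) (c : B) :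
    sweedlerConjR R B (c * x) ∈ J := by
  -- `T ((u ⊗ v) ⊗ w) = v ⊗ u S(w)`, so that `sweedlerConjR = T ∘ (Δ ⊗ id) ∘ Δ`.
  let T : (B ⊗[R] B) ⊗[R] B →ₗ[R] B ⊗[R] B :=
    map .id (mul' R B) ∘ₗ (TensorProduct.assoc R B B B).toLinearMap ∘ₗ
      map (TensorProduct.comm R B B).toLinearMap (antipode R)
  have hT : ∀ U (u v w : B), T ((u ⊗ₜ v) ⊗ₜ w * U) = (v ⊗ₜ u) * T U * (1 ⊗ₜ antipode R w) := by
    intro U u v w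
    induction U using TensorProduct.induction_on with
    | zero => simp
    | add U U' hU hU' => simp only [add_mul, mul_add, map_add, hU, hU']
    | tmul p z =>
      induction p using TensorProduct.induction_on with
      | zero => simp
      | add p p' hp hp' => simp only [add_tmul, add_mul, mul_add, map_add, hp, hp']
      | tmul x y => simp [T, antipode_mul_antidistrib, mul_assoc]
  have hmul : ∀ U V, T U ∈ J → T (V * U) ∈ J := by
    intro U V hU
    induction V using TensorProduct.induction_on with
    | zero => simp
    | add V V' hV hV' => simpa only [add_mul, map_add] using add_mem hV hV'
    | tmul p w =>
      induction p using TensorProduct.induction_on with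
      | zero => simp
      | add p p' hp hp' => simpa only [add_tmul, add_mul, map_add] using add_mem hp hp'
      | tmul u v => rw [hT]; exact hJ _ _ _ hU
  have hΔ : sweedlerConjR R B (c * x) =
      T (map comul .id (comul c) * map comul .id (comul x)) := by
    change T (map comul .id (comul (c * x))) = _
    rw [Bialgebra.comul_mul]
    exact congrArg T
      (map_mul (Algebra.TensorProduct.map (Bialgebra.comulAlgHom R B) (AlgHom.id R B)) _ _)
  exact hΔ ▸ hmul _ _ hx

end Sweedler

section SweedlerRepr

variable {R B ι : Type*} {κ : ι → Type*} [CommRing R] [Ring B] [HopfAlgebra R B] {x : B}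

theorem sweedlerConjL_apply_repr (r : Repr R x ι) (r₁ : ∀ i, Repr R (r.left i) (κ i)) :
    sweedlerConjL R B x = ∑ i ∈ r.index, ∑ j ∈ (r₁ i).index,
      (r₁ i).right j ⊗ₜ (antipode R ((r₁ i).left j) * r.right i) := by
  simp [sweedlerConjL, ← r.eq, ← (r₁ _).eq, map_sum, sum_tmul]

theorem sweedlerConjR_apply_repr (r : Repr R x ι) (r₁ : ∀ i, Repr R (r.left i) (κ i)) :
    sweedlerConjR R B x = ∑ i ∈ r.index, ∑ j ∈ (r₁ i).index,
      (r₁ i).right j ⊗ₜ ((r₁ i).left j * antipode R (r.right i)) := by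
  simp [sweedlerConjR, ← r.eq, ← (r₁ _).eq, map_sum, sum_tmul]

end SweedlerRepr

section SweedlerAug

variable {R A B : Type*} [CommRing R] [Ring A] [Ring B] [HopfAlgebra R A] [HopfAlgebra R B]
  (f : A →ₐc[R] B)

theorem sweedlerConjL_map_mem {a : A} (ha : counit (R := R) a = 0) :
    sweedlerConjL R B (f a) ∈ tmulSub (twoSidedAugSpan f) ⊤ := by
  let r := ℛ R a
  let r₁ i := ℛ R (r.left i)
  let s : A ⊗[R] B := ∑ i ∈ r.index, ∑ j ∈ (r₁ i).index,
    (r₁ i).right j ⊗ₜ (antipode R (f ((r₁ i).left j)) * f (r.right i))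
  have hs : map (f : A →ₗ[R] B) .id s = sweedlerConjL R B (f a) := by
    rw [sweedlerConjL_apply_repr (r.induced f) (fun i => (r₁ i).induced f)]
    simp [s, map_sum]
  have hε : TensorProduct.lid R B (rTensor B counit s) = 0 := by
    calc TensorProduct.lid R B (rTensor B counit s)
        = ∑ i ∈ r.index, antipode R (f (∑ j ∈ (r₁ i).index,
            counit (R := R) ((r₁ i).right j) • (r₁ i).left j)) * f (r.right i) := by
          simp [s, map_sum, Finset.sum_mul]
      _ = 0 := by
          simpa [sum_counit_right_smul, ha] using
            sum_antipode_mul_eq_algebraMap_counit (r.induced f)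
  simpa [hs, hε] using map_sub_one_tmul_mem_tmulSub f s

theorem sweedlerConjR_map_mem {a : A} (ha : counit (R := R) a = 0) :
    sweedlerConjR R B (f a) ∈ tmulSub (twoSidedAugSpan f) ⊤ := by
  let r := ℛ R a
  let r₁ i := ℛ R (r.left i)
  let s : A ⊗[R] B := ∑ i ∈ r.index, ∑ j ∈ (r₁ i).index,
    (r₁ i).right j ⊗ₜ (f ((r₁ i).left j) * antipode R (f (r.right i)))
  have hs : map (f : A →ₗ[R] B) .id s = sweedlerConjR R B (f a) := by
    rw [sweedlerConjR_apply_repr (r.induced f) (fun i => (r₁ i).induced f)]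
    simp [s, map_sum]
  have hε : TensorProduct.lid R B (rTensor B counit s) = 0 := by
    calc TensorProduct.lid R B (rTensor B counit s)
        = ∑ i ∈ r.index, f (∑ j ∈ (r₁ i).index,
            counit (R := R) ((r₁ i).right j) • (r₁ i).left j) * antipode R (f (r.right i)) := by
          simp [s, map_sum, Finset.sum_mul]
      _ = 0 := by
          simpa [sum_counit_right_smul, ha] using
            sum_mul_antipode_eq_algebraMap_counit (r.induced f)
  simpa [hs, hε] using map_sub_one_tmul_mem_tmulSub f s

theorem sweedlerConjL_mem_of_mem_rightAugSpan {x : B} (hx : x ∈ rightAugSpan f) :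
    sweedlerConjL R B x ∈ tmulSub (twoSidedAugSpan f) ⊤ := by
  have hle : rightAugSpan f ≤ (tmulSub (twoSidedAugSpan f) ⊤).comap (sweedlerConjL R B) := by
    refine Submodule.span_le.2 ?_
    rintro _ ⟨a, b, ha, rfl⟩
    exact sweedlerConjL_mul_mem
      (mul_mul_mem_tmulSub (mul_mul_mem_twoSidedAugSpan f) fun _ _ _ _ => Submodule.mem_top)
      (sweedlerConjL_map_mem f ha) b
  exact hle hx

theorem sweedlerConjR_mem_of_mem_leftAugSpan {x : B} (hx : x ∈ leftAugSpan f) :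
    sweedlerConjR R B x ∈ tmulSub (twoSidedAugSpan f) ⊤ := by
  have hle : leftAugSpan f ≤ (tmulSub (twoSidedAugSpan f) ⊤).comap (sweedlerConjR R B) := by
    refine Submodule.span_le.2 ?_
    rintro _ ⟨b, a, ha, rfl⟩
    exact sweedlerConjR_mul_mem
      (mul_mul_mem_tmulSub (mul_mul_mem_twoSidedAugSpan f) fun _ _ _ _ => Submodule.mem_top)
      (sweedlerConjR_map_mem f ha) b
  exact hle hx

end SweedlerAug

theorem normal_hom_gives_normal_hopf_ideal_general
    (R A B : Type*) [CommRing R]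
    [Ring A] [Ring B] [HopfAlgebra R A] [HopfAlgebra R B]
    (f : A →ₐc[R] B)
    (hnormal : ∀ (a : A) (b : B),
      lAd R B (f a) b ∈ Set.range f ∧ rAd R B (f a) b ∈ Set.range f) :
    twoSidedAugSpan f = leftAugSpan f ∧
    twoSidedAugSpan f = rightAugSpan f ∧
    (∀ x ∈ twoSidedAugSpan f, (Coalgebra.counit : B →ₗ[R] R) x = 0) ∧
    (∀ x ∈ twoSidedAugSpan f, (Coalgebra.comul : B →ₗ[R] B ⊗[R] B) x ∈
      tmulSub (twoSidedAugSpan f) (⊤ : Submodule R B) ⊔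
        tmulSub (⊤ : Submodule R B) (twoSidedAugSpan f)) ∧
    (∀ x ∈ twoSidedAugSpan f, (HopfAlgebra.antipode R : B →ₗ[R] B) x ∈ twoSidedAugSpan f) ∧
    (∀ x ∈ twoSidedAugSpan f,
      sweedlerConjL R B x ∈ tmulSub (twoSidedAugSpan f) (⊤ : Submodule R B) ∧
      sweedlerConjR R B x ∈ tmulSub (twoSidedAugSpan f) (⊤ : Submodule R B)) := by
  have hL := twoSidedAugSpan_eq_leftAugSpan f fun a b => (hnormal a b).2
  have hR := twoSidedAugSpan_eq_rightAugSpan f fun a b => (hnormal a b).1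
  refine ⟨hL, hR, fun _ => counit_eq_zero_of_mem_twoSidedAugSpan f,
    fun _ => comul_mem_of_mem_twoSidedAugSpan f, fun _ => antipode_mem_twoSidedAugSpan f,
    fun x hx => ⟨?_, ?_⟩⟩
  · exact sweedlerConjL_mem_of_mem_rightAugSpan f (hR ▸ hx)
  · exact sweedlerConjR_mem_of_mem_leftAugSpan f (hL ▸ hx)

/-- **Lemma.** Let `R` be a Dedekind domain and `f : A → B` a normal homomorphism
of `R`-flat Hopf algebras. Then `I := B f(A)⁺ B` satisfies
`I = B f(A)⁺ = f(A)⁺ B`, and `I` is a normal Hopf ideal of `B`: `ε(I) = 0`,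
`Δ(I) ⊆ I ⊗ B + B ⊗ I`, `S(I) ⊆ I`, and for all `a ∈ I` both `∑ a₂ ⊗ S(a₁)a₃`
and `∑ a₂ ⊗ a₁S(a₃)` lie in the image of `I ⊗ B` in `B ⊗ B`. -/
theorem normal_hom_gives_normal_hopf_ideal
    (R A B : Type*) [CommRing R] [IsDomain R] [IsDedekindDomain R]
    [Ring A] [Ring B] [HopfAlgebra R A] [HopfAlgebra R B]
    [Module.Flat R A] [Module.Flat R B]
    (f : A →ₐc[R] B)
    (hnormal : ∀ (a : A) (b : B),
      lAd R B (f a) b ∈ Set.range f ∧ rAd R B (f a) b ∈ Set.range f) :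
    twoSidedAugSpan f = leftAugSpan f ∧
    twoSidedAugSpan f = rightAugSpan f ∧
    (∀ x ∈ twoSidedAugSpan f, (Coalgebra.counit : B →ₗ[R] R) x = 0) ∧
    (∀ x ∈ twoSidedAugSpan f, (Coalgebra.comul : B →ₗ[R] B ⊗[R] B) x ∈
      tmulSub (twoSidedAugSpan f) (⊤ : Submodule R B) ⊔
        tmulSub (⊤ : Submodule R B) (twoSidedAugSpan f)) ∧
    (∀ x ∈ twoSidedAugSpan f, (HopfAlgebra.antipode R : B →ₗ[R] B) x ∈ twoSidedAugSpan f) ∧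
    (∀ x ∈ twoSidedAugSpan f,
      sweedlerConjL R B x ∈ tmulSub (twoSidedAugSpan f) (⊤ : Submodule R B) ∧
      sweedlerConjR R B x ∈ tmulSub (twoSidedAugSpan f) (⊤ : Submodule R B)) :=
  normal_hom_gives_normal_hopf_ideal_general R A B f hnormal
end

section
/- Let R be a Dedekind domain, B an associative unital R-algebra which is flat as an R-module, and A ⊆ B an R-subalgebra such that B is faithfully flat as a left A-module. Then the quotient B/A is torsion-free (equivalently flat) as an R-module, i.e. A is a saturated R-submodule of B. -/
/-- Flatness of a left module over a possibly noncommutative ring, expressed by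
Lazard's equational criterion: every linear relation `∑ aᵢ • bᵢ = 0` with
coefficients in the ring trivializes. This is equivalent to exactness of the
functor `(-) ⊗_A B` on right `A`-modules. -/
def IsFlatMod (A B : Type*) [Ring A] [AddCommGroup B] [Module A B] : Prop :=
  ∀ (n : ℕ) (a : Fin n → A) (b : Fin n → B), (∑ i, a i • b i) = 0 →
    ∃ (m : ℕ) (c : Fin n → Fin m → A) (y : Fin m → B),
      (∀ i, b i = ∑ j, c i j • y j) ∧ ∀ j, (∑ i, a i * c i j) = 0

/-- Faithful flatness of a left module `B` over a possibly noncommutative ring `A`: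
`B` is flat, and `I • B ≠ B` for every proper right ideal `I` of `A`. This is
equivalent to the functor `(-) ⊗_A B` on right `A`-modules being exact and killing
only the zero module. -/
def IsFaithfullyFlatMod (A B : Type*) [Ring A] [AddCommGroup B] [Module A B] : Prop :=
  IsFlatMod A B ∧
    ∀ I : Submodule Aᵐᵒᵖ A, I ≠ ⊤ →
      AddSubgroup.closure {x : B | ∃ a ∈ I, ∃ y : B, x = a • y} ≠ ⊤

lemma flat_smul_injective {R M : Type*} [CommRing R] [IsDomain R] [AddCommGroup M]
    [Module R M] [Module.Flat R M] {r : R} (hr : r ≠ 0) {x y : M}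
    (h : r • x = r • y) : x = y := by
  have hf : Function.Injective (LinearMap.lsmul R R r) := by
    intro a b hab
    simp only [LinearMap.lsmul_apply, smul_eq_mul] at hab
    exact mul_left_cancel₀ hr hab
  have h2 := Module.Flat.rTensor_preserves_injective_linearMap (M := M)
    (LinearMap.lsmul R R r) hf
  have e : ∀ z : M, LinearMap.rTensor M (LinearMap.lsmul R R r)
      ((TensorProduct.lid R M).symm z) = (TensorProduct.lid R M).symm (r • z) := by
    intro z
    simp only [TensorProduct.lid_symm_apply, LinearMap.rTensor_tmul, LinearMap.lsmul_apply,
      smul_eq_mul, mul_one]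
    rw [← TensorProduct.smul_tmul, smul_eq_mul, mul_one]
  have heq : LinearMap.rTensor M (LinearMap.lsmul R R r) ((TensorProduct.lid R M).symm x) =
      LinearMap.rTensor M (LinearMap.lsmul R R r) ((TensorProduct.lid R M).symm y) := by
    rw [e x, e y, h]
  exact (TensorProduct.lid R M).symm.injective (h2 heq)

/-- Let `R` be a Dedekind domain, `B` an `R`-flat associative unital `R`-algebra, and
`A ⊆ B` an `R`-subalgebra such that `B` is faithfully flat as a left `A`-module.
Then `A` is a saturated `R`-submodule of `B` (equivalently, `B/A` is `R`-torsion-free,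
equivalently `R`-flat). -/
theorem saturated_of_faithfullyFlat
    (R B : Type*) [CommRing R] [IsDomain R] [IsDedekindDomain R]
    [Ring B] [Algebra R B] [Module.Flat R B]
    (A : Subalgebra R B)
    (hff : IsFaithfullyFlatMod ↥A B) :
    IsSaturatedIn (Subalgebra.toSubmodule A) := by
  intro r b hr hmem
  -- `aA` is `r • b`, viewed as an element of `A`.
  set aA : ↥A := ⟨r • b, hmem⟩ with haA
  -- The linear relation `aA • 1 - (r • 1) • b = 0` in `B`, with coefficients in `A`.
  have hrel : (∑ i, (![aA, -(r • 1)] : Fin 2 → ↥A) i • (![1, b] : Fin 2 → B) i) = 0 := by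
    simp only [Fin.sum_univ_two, Matrix.cons_val_zero, Matrix.cons_val_one, Matrix.head_cons]
    have h1 : aA • (1 : B) = r • b := by
      show (↑aA : B) * 1 = r • b
      rw [mul_one]
    have h2 : (-(r • 1) : ↥A) • b = -(r • b) := by
      show (↑(-(r • 1) : ↥A) : B) * b = -(r • b)
      push_cast
      rw [neg_mul, smul_mul_assoc, one_mul]
    rw [h1, h2, add_neg_cancel]
  obtain ⟨m, c, y, hby, hc⟩ := hff.1 2 ![aA, -(r • 1)] ![1, b] hrel
  -- The right ideal `J = {x : A | ∃ z, aA * x = r • z}`.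
  set J : Submodule (↥A)ᵐᵒᵖ ↥A :=
    { carrier := {x : ↥A | ∃ z : ↥A, aA * x = r • z}
      add_mem' := by
        rintro x₁ x₂ ⟨z₁, h₁⟩ ⟨z₂, h₂⟩
        exact ⟨z₁ + z₂, by rw [mul_add, h₁, h₂, smul_add]⟩
      zero_mem' := ⟨0, by simp⟩
      smul_mem' := by
        rintro cc x ⟨z, hz⟩
        refine ⟨z * cc.unop, ?_⟩
        show aA * (x * cc.unop) = r • (z * cc.unop)
        rw [← mul_assoc, hz, smul_mul_assoc] } with hJ
  -- Each `c 0 j` lies in `J`.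
  have hc0 : ∀ j, c 0 j ∈ J := by
    intro j
    have := hc j
    simp only [Fin.sum_univ_two, Matrix.cons_val_zero, Matrix.cons_val_one, Matrix.head_cons] at this
    refine ⟨c 1 j, ?_⟩
    rw [neg_mul] at this
    have h' : aA * c 0 j = (r • 1 : ↥A) * c 1 j := by
      rwa [add_neg_eq_zero] at this
    rw [h', smul_mul_assoc, one_mul]
  -- By faithfulness, `J = ⊤`, since `1 = ∑ j, c 0 j • y j` forces `J • B = B`.
  have hJtop : J = ⊤ := by
    by_contra hne
    apply hff.2 J hne
    rw [AddSubgroup.eq_top_iff']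
    intro x
    have hone : (1 : B) = ∑ j, c 0 j • y j := by
      have := hby 0
      simpa using this
    have hx : x = ∑ j, c 0 j • (y j * x) := by
      calc x = (1 : B) * x := (one_mul x).symm
        _ = (∑ j, c 0 j • y j) * x := by rw [← hone]
        _ = ∑ j, (c 0 j • y j) * x := by rw [Finset.sum_mul]
        _ = ∑ j, c 0 j • (y j * x) := by
            refine Finset.sum_congr rfl fun j _ => ?_
            show ((c 0 j : B) * y j) * x = (c 0 j : B) * (y j * x)
            rw [mul_assoc]
    rw [hx]
    exact AddSubgroup.sum_mem _ fun j _ => AddSubgroup.subset_closure ⟨c 0 j, hc0 j, y j * x, rfl⟩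
  -- Hence `1 ∈ J`, so `aA = r • z` for some `z ∈ A`, and torsion-freeness gives `b = z`.
  have h1J : (1 : ↥A) ∈ J := hJtop ▸ Submodule.mem_top
  obtain ⟨z, hz⟩ := h1J
  rw [mul_one] at hz
  have hzB : r • b = r • (z : B) := by
    have := congrArg (Subtype.val) hz
    push_cast at this
    simpa using this
  have : b = (z : B) := flat_smul_injective hr hzB
  rw [this]
  exact z.2
end
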